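/- Let N ≥ 1, let v : {0, …, N−1} → ℝ be nonnegative and not identically zero, let f = Σ_{n=0}^{N−1} v_n 1_{[n,n+1)}, and for each integer j with 0 ≤ j ≤ 2N set L_j = Σ_{n=max(0, j−N)}^{min(j−1, N−1)} v_n v_{j−n−1}. Then ‖f ∗ f‖²_{L²(ℝ)} / (‖f ∗ f‖_{L^∞(ℝ)} ‖f ∗ f‖_{L¹(ℝ)}) = ((1/3) Σ_{j=0}^{2N−1} (L_j² + L_j L_{j+1} + L_{j+1}²)) / ((max_{0 ≤ j ≤ 2N−1} L_j) · (Σ_{n=0}^{N−1} v_n)²). -/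

import Mathlib

/-!
The autoconvolution of `1_{[a,a+1)}` and `1_{[b,b+1)}` is the tent `x ↦ tent (x - a - b)`
supported on `[a + b, a + b + 2]`. Hence `f ∗ f` is continuous, vanishes off `(0, 2N)`, takes
the value `L_j` at the integer `j`, and is affine on each `[j, j + 1]`. Its sup norm is therefore
`max_j L_j`, and its `L¹` and `L²` norms reduce to integrals over `[0, 1]` of an affine function
and of its square: `Σ_j (L_j + L_{j+1}) / 2 = (Σ_n v_n)²` and
`Σ_j (L_j² + L_j L_{j+1} + L_{j+1}²) / 3`.
-/

open MeasureTheory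

/-- The autoconvolution of `f`: `(f ∗ f)(x) = ∫ f(t) f(x - t) dt`. -/
noncomputable def autoconv (f : ℝ → ℝ) : ℝ → ℝ := fun x => ∫ t, f t * f (x - t)

/-- The step function `f = Σ_{n=0}^{N-1} v_n 1_{[n, n+1)}`. -/
noncomputable def stepFun (N : ℕ) (v : Fin N → ℝ) : ℝ → ℝ :=
  fun x => ∑ n : Fin N, v n * (Set.Ico ((n : ℕ) : ℝ) ((n : ℕ) + 1)).indicator 1 x

open Set Finset

theorem eLpNorm_one_eq_ofReal_integral {α : Type*} [MeasurableSpace α] {μ : Measure α}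
    {f : α → ℝ} (hf : Integrable f μ) (hnn : 0 ≤ f) :
    eLpNorm f 1 μ = ENNReal.ofReal (∫ x, f x ∂μ) := by
  rw [eLpNorm_one_eq_lintegral_enorm, ofReal_integral_eq_lintegral_ofReal hf (ae_of_all _ hnn)]
  exact lintegral_congr fun x => Real.enorm_of_nonneg (hnn x)

theorem eLpNorm_two_sq_eq_ofReal_integral {α : Type*} [MeasurableSpace α] {μ : Measure α}
    {f : α → ℝ} (hf : Integrable (fun x => f x ^ 2) μ) :
    eLpNorm f 2 μ ^ 2 = ENNReal.ofReal (∫ x, f x ^ 2 ∂μ) := by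
  have h := eLpNorm_nnreal_pow_eq_lintegral (f := f) (μ := μ) (p := 2) two_ne_zero
  simp only [NNReal.coe_ofNat, ENNReal.coe_ofNat, ENNReal.rpow_ofNat] at h
  rw [h, ofReal_integral_eq_lintegral_ofReal hf (ae_of_all _ fun x => sq_nonneg _)]
  congr 1 with x
  rw [← enorm_pow, Real.enorm_of_nonneg (sq_nonneg _)]

theorem Continuous.eLpNormEssSup_eq_iSup {X E : Type*} [TopologicalSpace X] [MeasurableSpace X]
    {μ : Measure X} [μ.IsOpenPosMeasure] [NormedAddCommGroup E] {f : X → E}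
    (hf : Continuous f) : eLpNormEssSup f μ = ⨆ x, ‖f x‖ₑ := by
  refine le_antisymm (eLpNormEssSup_le_of_ae_enorm_bound (ae_of_all _ (le_iSup _))) ?_
  have hclosed : IsClosed {x | ‖f x‖ₑ ≤ eLpNormEssSup f μ} :=
    isClosed_le hf.enorm continuous_const
  exact iSup_le fun x => hclosed.closure_subset (Measure.dense_of_ae ae_le_eLpNormEssSup x)

theorem Continuous.eLpNorm_top_eq_ofReal {X : Type*} [TopologicalSpace X] [MeasurableSpace X]
    {μ : Measure X} [μ.IsOpenPosMeasure] {f : X → ℝ} (hf : Continuous f) (hnn : 0 ≤ f)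
    {M : ℝ} (hM : IsGreatest (range f) M) : eLpNorm f ⊤ μ = ENNReal.ofReal M := by
  obtain ⟨⟨x₀, rfl⟩, hle⟩ := hM
  rw [eLpNorm_exponent_top, hf.eLpNormEssSup_eq_iSup]
  simp only [Real.enorm_of_nonneg (hnn _)]
  exact le_antisymm (iSup_le fun x => ENNReal.ofReal_le_ofReal (hle ⟨x, rfl⟩))
    (le_iSup (fun x => ENNReal.ofReal (f x)) x₀)

theorem integral_one_sub_mul_add_mul (A B : ℝ) :
    ∫ t in (0 : ℝ)..1, ((1 - t) * A + t * B) = (A + B) / 2 := by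
  have h : ∀ t : ℝ, (1 - t) * A + t * B = A + (B - A) * t := fun t => by ring
  simp only [h]
  rw [intervalIntegral.integral_add intervalIntegrable_const
    ((continuous_const_mul _).intervalIntegrable _ _), intervalIntegral.integral_const_mul,
    integral_id]
  norm_num
  ring

theorem integral_one_sub_mul_add_mul_sq (A B : ℝ) :
    ∫ t in (0 : ℝ)..1, ((1 - t) * A + t * B) ^ 2 = (A ^ 2 + A * B + B ^ 2) / 3 := by
  have h : ∀ t : ℝ, ((1 - t) * A + t * B) ^ 2 =
      A ^ 2 + 2 * A * (B - A) * t + (B - A) ^ 2 * t ^ 2 := fun t => by ring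
  simp only [h]
  rw [intervalIntegral.integral_add (Continuous.intervalIntegrable (by fun_prop) _ _)
      (Continuous.intervalIntegrable (by fun_prop) _ _),
    intervalIntegral.integral_add intervalIntegrable_const
      (Continuous.intervalIntegrable (by fun_prop) _ _),
    intervalIntegral.integral_const_mul, intervalIntegral.integral_const_mul, integral_id,
    integral_pow]
  norm_num
  ring

structure IsLinearInterpolant (g : ℝ → ℝ) (L : ℕ → ℝ) (K : ℕ) : Prop where
  eq_of_mem_Icc : ∀ j < K, ∀ x ∈ Icc (j : ℝ) (j + 1),
    g x = (1 - (x - j)) * L j + (x - j) * L (j + 1)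
  eq_zero_of_notMem_Ioo : ∀ x ∉ Ioo (0 : ℝ) K, g x = 0

namespace IsLinearInterpolant

variable {g : ℝ → ℝ} {L : ℕ → ℝ} {K : ℕ}

theorem apply_natCast (hg : IsLinearInterpolant g L K) {j : ℕ} (hj : j < K) : g j = L j := by
  rw [hg.eq_of_mem_Icc j hj j ⟨le_rfl, by linarith⟩]
  ring

theorem exists_eq_one_sub_mul_add_mul (hg : IsLinearInterpolant g L K) {x : ℝ}
    (hx : x ∈ Ioo (0 : ℝ) K) :
    ∃ j < K, ∃ t ∈ Icc (0 : ℝ) 1, g x = (1 - t) * L j + t * L (j + 1) := by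
  have hjx : (⌊x⌋₊ : ℝ) ≤ x := Nat.floor_le hx.1.le
  have hxj : x < ⌊x⌋₊ + 1 := Nat.lt_floor_add_one x
  have hjK : ⌊x⌋₊ < K := (Nat.floor_lt hx.1.le).mpr hx.2
  exact ⟨⌊x⌋₊, hjK, x - ⌊x⌋₊, ⟨by linarith, by linarith⟩,
    hg.eq_of_mem_Icc _ hjK x ⟨hjx, hxj.le⟩⟩

theorem apply_mem_Icc (hg : IsLinearInterpolant g L K) {a b : ℝ} (hab : (0 : ℝ) ∈ Icc a b)
    (hL : ∀ j ≤ K, L j ∈ Icc a b) (x : ℝ) : g x ∈ Icc a b := by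
  by_cases hx : x ∈ Ioo (0 : ℝ) K
  · obtain ⟨j, hj, t, ht, hgx⟩ := hg.exists_eq_one_sub_mul_add_mul hx
    rw [hgx]
    simpa only [smul_eq_mul] using convex_Icc a b (hL j hj.le) (hL (j + 1) hj)
      (sub_nonneg.2 ht.2) ht.1 (sub_add_cancel 1 t)
  · rw [hg.eq_zero_of_notMem_Ioo x hx]
    exact hab

theorem integrable_comp (hg : IsLinearInterpolant g L K) (hcont : Continuous g) {φ : ℝ → ℝ}
    (hφ : Continuous φ) (hφ0 : φ 0 = 0) : Integrable fun x => φ (g x) := by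
  refine (hφ.comp hcont).integrable_of_hasCompactSupport
    (HasCompactSupport.intro (isCompact_Icc (a := (0 : ℝ)) (b := K)) fun x hx => ?_)
  rw [Function.comp_apply, hg.eq_zero_of_notMem_Ioo x fun h => hx (Ioo_subset_Icc_self h), hφ0]

theorem integrable (hg : IsLinearInterpolant g L K) (hcont : Continuous g) : Integrable g :=
  hg.integrable_comp hcont (φ := id) continuous_id rfl

theorem integral_comp (hg : IsLinearInterpolant g L K) (hcont : Continuous g) {φ : ℝ → ℝ}
    (hφ : Continuous φ) (hφ0 : φ 0 = 0) :
    ∫ x, φ (g x) =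
      ∑ j ∈ range K, ∫ t in (0 : ℝ)..1, φ ((1 - t) * L j + t * L (j + 1)) := by
  have hsupp : ∀ x ∉ Ioc (0 : ℝ) K, φ (g x) = 0 := fun x hx => by
    rw [hg.eq_zero_of_notMem_Ioo x fun h => hx (Ioo_subset_Ioc_self h), hφ0]
  have hadj := intervalIntegral.sum_integral_adjacent_intervals (a := Nat.cast) (n := K)
    (μ := volume) fun j _ => (hφ.comp hcont).intervalIntegrable _ _
  rw [Nat.cast_zero, Function.comp_def] at hadj
  rw [← setIntegral_eq_integral_of_forall_compl_eq_zero hsupp,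
    ← intervalIntegral.integral_of_le K.cast_nonneg, ← hadj]
  refine sum_congr rfl fun j hj => ?_
  have hpiece : EqOn (fun x => φ (g x)) (fun x => φ ((1 - (x - j)) * L j + (x - j) * L (j + 1)))
      (uIcc (j : ℝ) (j + 1)) := fun x hx => by
    rw [Set.uIcc_of_le (by linarith)] at hx
    simp only [hg.eq_of_mem_Icc j (Finset.mem_range.mp hj) x hx]
  rw [Nat.cast_succ, intervalIntegral.integral_congr hpiece,
    intervalIntegral.integral_comp_sub_right (fun t => φ ((1 - t) * L j + t * L (j + 1))),
    sub_self, add_sub_cancel_left]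

theorem integral_eq_sum (hg : IsLinearInterpolant g L K) (hcont : Continuous g) :
    ∫ x, g x = ∑ j ∈ range K, (L j + L (j + 1)) / 2 :=
  (hg.integral_comp hcont (φ := id) continuous_id rfl).trans
    (sum_congr rfl fun _ _ => integral_one_sub_mul_add_mul _ _)

theorem integral_sq_eq_sum (hg : IsLinearInterpolant g L K) (hcont : Continuous g) :
    ∫ x, g x ^ 2 = ∑ j ∈ range K, (L j ^ 2 + L j * L (j + 1) + L (j + 1) ^ 2) / 3 :=
  (hg.integral_comp hcont (continuous_pow 2) (zero_pow two_ne_zero)).trans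
    (sum_congr rfl fun _ _ => integral_one_sub_mul_add_mul_sq _ _)

end IsLinearInterpolant

noncomputable def tent (y : ℝ) : ℝ := max 0 (min y (2 - y))

@[fun_prop]
theorem continuous_tent : Continuous tent := by
  unfold tent
  fun_prop

theorem tent_of_nonpos {y : ℝ} (hy : y ≤ 0) : tent y = 0 :=
  max_eq_left ((min_le_left _ _).trans hy)

theorem tent_of_two_le {y : ℝ} (hy : 2 ≤ y) : tent y = 0 :=
  max_eq_left ((min_le_right _ _).trans (by linarith))

theorem tent_sub_natCast {j : ℕ} {x : ℝ} (hx : x ∈ Icc (j : ℝ) (j + 1)) (k : ℕ) :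
    tent (x - k) = if k + 1 = j then 1 - (x - j) else if k = j then x - j else 0 := by
  obtain ⟨hjx, hxj⟩ := hx
  split_ifs with h₁ h₂
  · subst h₁
    push_cast at *
    rw [tent, min_eq_right (by linarith), max_eq_right (by linarith)]
    ring
  · subst h₂
    rw [tent, min_eq_left (by linarith), max_eq_right (by linarith)]
  · rcases (by omega : k + 2 ≤ j ∨ j + 1 ≤ k) with h | h
    · exact tent_of_two_le (by rify at h; linarith)
    · exact tent_of_nonpos (by rify at h; linarith)

theorem indicator_Ico_mul_indicator_Ico_sub (a b x : ℝ) :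
    (fun t => (Ico a (a + 1)).indicator (1 : ℝ → ℝ) t * (Ico b (b + 1)).indicator 1 (x - t)) =
      (Ico a (a + 1) ∩ Ioc (x - (b + 1)) (x - b)).indicator 1 := by
  rw [inter_indicator_one, ← preimage_const_sub_Ico]
  rfl

theorem integrable_indicator_Ico_mul_indicator_Ico_sub (a b x : ℝ) :
    Integrable fun t => (Ico a (a + 1)).indicator (1 : ℝ → ℝ) t *
      (Ico b (b + 1)).indicator 1 (x - t) := by
  rw [indicator_Ico_mul_indicator_Ico_sub]
  exact (integrableOn_const (measure_ne_top_of_subset inter_subset_left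
    measure_Ico_lt_top.ne)).integrable_indicator (measurableSet_Ico.inter measurableSet_Ioc)

theorem integral_indicator_Ico_mul_indicator_Ico_sub (a b x : ℝ) :
    ∫ t, (Ico a (a + 1)).indicator (1 : ℝ → ℝ) t * (Ico b (b + 1)).indicator 1 (x - t) =
      tent (x - a - b) := by
  rw [indicator_Ico_mul_indicator_Ico_sub,
    integral_indicator_one (measurableSet_Ico.inter measurableSet_Ioc), measureReal_def,
    measure_congr ((ae_eq_refl _).inter Ico_ae_eq_Ioc.symm), Set.Ico_inter_Ico,
    Real.volume_Ico, ENNReal.toReal_ofReal', tent, max_comm]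
  congr 1
  simp only [min_def, max_def]
  split_ifs <;> linarith

def autocorr {N : ℕ} (v : Fin N → ℝ) (j : ℕ) : ℝ :=
  ∑ n : Fin N, ∑ m : Fin N, if (n : ℕ) + (m : ℕ) + 1 = j then v n * v m else 0

section autocorr

variable {N : ℕ} {v : Fin N → ℝ}

theorem autocorr_nonneg (hv : ∀ n, 0 ≤ v n) (j : ℕ) : 0 ≤ autocorr v j :=
  sum_nonneg fun n _ => sum_nonneg fun m _ => ite_nonneg (mul_nonneg (hv n) (hv m)) le_rfl

theorem autocorr_zero : autocorr v 0 = 0 :=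
  sum_eq_zero fun _ _ => sum_eq_zero fun _ _ => if_neg (by omega)

theorem autocorr_two_mul : autocorr v (2 * N) = 0 :=
  sum_eq_zero fun n _ => sum_eq_zero fun m _ => if_neg (by omega)

theorem autocorr_pos (hv : ∀ n, 0 ≤ v n) {n : Fin N} (hn : v n ≠ 0) :
    0 < autocorr v (2 * n + 1) := by
  have hnn : ∀ a b : Fin N, 0 ≤ if (a : ℕ) + b + 1 = 2 * n + 1 then v a * v b else 0 :=
    fun a b => ite_nonneg (mul_nonneg (hv a) (hv b)) le_rfl
  refine sum_pos' (fun a _ => sum_nonneg fun b _ => hnn a b) ⟨n, mem_univ n, ?_⟩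
  refine sum_pos' (fun b _ => hnn n b) ⟨n, mem_univ n, ?_⟩
  rw [if_pos (by omega)]
  exact mul_pos ((hv n).lt_of_ne' hn) ((hv n).lt_of_ne' hn)

theorem sum_range_autocorr_succ :
    ∑ j ∈ range (2 * N), autocorr v (j + 1) = (∑ n, v n) ^ 2 := by
  rw [sq, sum_mul_sum]
  unfold autocorr
  rw [sum_comm]
  refine sum_congr rfl fun n _ => ?_
  rw [sum_comm]
  refine sum_congr rfl fun m _ => ?_
  simp only [Nat.add_right_cancel_iff]
  rw [sum_ite_eq, if_pos (Finset.mem_range.mpr (by omega))]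

theorem sum_range_autocorr : ∑ j ∈ range (2 * N), autocorr v j = (∑ n, v n) ^ 2 := by
  have h := (sum_range_succ (autocorr v) (2 * N)).symm.trans
    (sum_range_succ' (autocorr v) (2 * N))
  rw [autocorr_zero, autocorr_two_mul, add_zero, add_zero] at h
  rw [h, sum_range_autocorr_succ]

theorem sum_range_autocorr_add_succ_div_two :
    ∑ j ∈ range (2 * N), (autocorr v j + autocorr v (j + 1)) / 2 = (∑ n, v n) ^ 2 := by
  rw [← sum_div, sum_add_distrib, sum_range_autocorr, sum_range_autocorr_succ]
  ring

end autocorr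

section autoconv

variable {N : ℕ} (v : Fin N → ℝ)

theorem autoconv_stepFun (x : ℝ) :
    autoconv (stepFun N v) x = ∑ n : Fin N, ∑ m : Fin N, v n * v m * tent (x - n - m) := by
  have hprod : ∀ t, stepFun N v t * stepFun N v (x - t) =
      ∑ n : Fin N, ∑ m : Fin N, v n * v m *
        ((Ico (n : ℝ) (n + 1)).indicator 1 t * (Ico (m : ℝ) (m + 1)).indicator 1 (x - t)) := by
    intro t
    simp only [stepFun, sum_mul_sum]
    exact sum_congr rfl fun n _ => sum_congr rfl fun m _ => by ring
  have hint : ∀ n m : Fin N, Integrable fun t => v n * v m *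
      ((Ico (n : ℝ) (n + 1)).indicator 1 t * (Ico (m : ℝ) (m + 1)).indicator 1 (x - t)) :=
    fun n m => (integrable_indicator_Ico_mul_indicator_Ico_sub _ _ x).const_mul _
  simp only [autoconv, hprod]
  rw [integral_finsetSum _ fun n _ => integrable_finsetSum _ fun m _ => hint n m]
  refine sum_congr rfl fun n _ => ?_
  rw [integral_finsetSum _ fun m _ => hint n m]
  simp only [integral_const_mul, integral_indicator_Ico_mul_indicator_Ico_sub]

theorem continuous_autoconv_stepFun : Continuous (autoconv (stepFun N v)) := by
  simp only [funext (autoconv_stepFun v)]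
  fun_prop

theorem isLinearInterpolant_autoconv_stepFun :
    IsLinearInterpolant (autoconv (stepFun N v)) (autocorr v) (2 * N) where
  eq_of_mem_Icc j _ x hx := by
    simp only [autoconv_stepFun, autocorr, mul_sum, ← sum_add_distrib]
    refine sum_congr rfl fun n _ => sum_congr rfl fun m _ => ?_
    rw [sub_sub, ← Nat.cast_add, tent_sub_natCast hx]
    split_ifs <;> first | omega | ring
  eq_zero_of_notMem_Ioo x hx := by
    rw [autoconv_stepFun]
    refine sum_eq_zero fun n _ => sum_eq_zero fun m _ => ?_
    have hn : (n : ℝ) + 1 ≤ N := by exact_mod_cast n.isLt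
    have hm : (m : ℝ) + 1 ≤ N := by exact_mod_cast m.isLt
    have hn₀ : (0 : ℝ) ≤ n := Nat.cast_nonneg _
    have hm₀ : (0 : ℝ) ≤ m := Nat.cast_nonneg _
    simp only [Set.mem_Ioo, not_and_or, not_lt, Nat.cast_mul, Nat.cast_ofNat] at hx
    rcases hx with h | h
    · rw [tent_of_nonpos (by linarith), mul_zero]
    · rw [tent_of_two_le (by linarith), mul_zero]

theorem autoconv_stepFun_mem_Icc (hv : ∀ n, 0 ≤ v n) (hK : (range (2 * N)).Nonempty) (x : ℝ) :
    autoconv (stepFun N v) x ∈ Icc 0 ((range (2 * N)).sup' hK (autocorr v)) := by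
  obtain ⟨j₀, hj₀⟩ := hK
  have hM : 0 ≤ (range (2 * N)).sup' ⟨j₀, hj₀⟩ (autocorr v) :=
    (autocorr_nonneg hv j₀).trans (le_sup' _ hj₀)
  refine (isLinearInterpolant_autoconv_stepFun v).apply_mem_Icc ⟨le_rfl, hM⟩
    (fun j hj => ⟨autocorr_nonneg hv j, ?_⟩) x
  rcases hj.lt_or_eq with hj | rfl
  · exact le_sup' _ (Finset.mem_range.mpr hj)
  · exact autocorr_two_mul.trans_le hM

theorem isGreatest_range_autoconv_stepFun (hv : ∀ n, 0 ≤ v n) (hK : (range (2 * N)).Nonempty) :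
    IsGreatest (range (autoconv (stepFun N v))) ((range (2 * N)).sup' hK (autocorr v)) := by
  obtain ⟨j, hj, hjM⟩ := exists_mem_eq_sup' hK (autocorr v)
  refine ⟨⟨j, ?_⟩, forall_mem_range.2 fun x => (autoconv_stepFun_mem_Icc v hv hK x).2⟩
  rw [(isLinearInterpolant_autoconv_stepFun v).apply_natCast (Finset.mem_range.mp hj), hjM]

end autoconv

/-- For a nonnegative, not identically zero step function `f = Σ v_n 1_{[n,n+1)}`,
the autoconvolution Hölder ratio equals the explicit discrete expression in the
autocorrelation numbers `L_j`. -/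
theorem holder_ratio_stepFun_eq_discrete (N : ℕ) (hN : 1 ≤ N) (v : Fin N → ℝ)
    (hv : ∀ n, 0 ≤ v n) (hne : ∃ n, v n ≠ 0) (L : ℕ → ℝ)
    (hL : ∀ j, L j =
      ∑ n : Fin N, ∑ m : Fin N, if (n : ℕ) + (m : ℕ) + 1 = j then v n * v m else 0) :
    (eLpNorm (autoconv (stepFun N v)) 2 volume) ^ 2 /
      (eLpNorm (autoconv (stepFun N v)) ⊤ volume *
        eLpNorm (autoconv (stepFun N v)) 1 volume) =
    ENNReal.ofReal
      (((1 / 3) * ∑ j ∈ Finset.range (2 * N),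
          (L j ^ 2 + L j * L (j + 1) + L (j + 1) ^ 2)) /
        (((Finset.range (2 * N)).sup' (Finset.nonempty_range_iff.mpr (by omega)) L) *
          (∑ n : Fin N, v n) ^ 2)) := by
  obtain rfl : L = autocorr v := funext hL
  have hK : (range (2 * N)).Nonempty := nonempty_range_iff.mpr (by omega)
  have hg := isLinearInterpolant_autoconv_stepFun v
  have hcont := continuous_autoconv_stepFun v
  have hnn : 0 ≤ autoconv (stepFun N v) := fun x => (autoconv_stepFun_mem_Icc v hv hK x).1
  obtain ⟨n₀, hn₀⟩ := hne
  have hM : 0 < (range (2 * N)).sup' hK (autocorr v) := (autocorr_pos hv hn₀).trans_le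
    (le_sup' _ (Finset.mem_range.mpr (by have := n₀.isLt; omega)))
  have hS : 0 < ∑ n, v n :=
    sum_pos' (fun n _ => hv n) ⟨n₀, mem_univ _, (hv n₀).lt_of_ne' hn₀⟩
  rw [eLpNorm_two_sq_eq_ofReal_integral (hg.integrable_comp hcont (continuous_pow 2) (by simp)),
    hcont.eLpNorm_top_eq_ofReal hnn (isGreatest_range_autoconv_stepFun v hv hK),
    eLpNorm_one_eq_ofReal_integral (hg.integrable hcont) hnn, hg.integral_sq_eq_sum hcont,
    hg.integral_eq_sum hcont, sum_range_autocorr_add_succ_div_two, ← ENNReal.ofReal_mul hM.le,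
    ← ENNReal.ofReal_div_of_pos (by positivity), ← sum_div]
  congr 1
  ring
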